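/- Let A_0 = η I_d with η > 0 and A_t = A_{t-1} + x_t x_tᵀ for vectors x_t ∈ ℝ^d with ‖x_t‖ ≤ S. Then Σ_{t=1}^{T} min(1, ‖x_t‖²_{A_{t-1}⁻¹}) ≤ 2 ln(det(A_T)/det(A_0)) ≤ 2d ln(1 + T S²/(η d)). -/

import Mathlib

/-!
By the matrix determinant lemma, `det A_t = det A_{t-1} * (1 + ‖x_t‖²_{A_{t-1}⁻¹})`, so
`log (det A_T / det A_0)` telescopes into `∑ log (1 + ‖x_t‖²_{A_{t-1}⁻¹})`, and each summand
dominates `min 1 u / 2`. For the second bound, AM-GM on the eigenvalues gives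
`det A_T ≤ (tr A_T / d) ^ d`, while `tr A_T ≤ η d + T S²`.
-/

open Matrix Finset

lemma min_one_le_two_mul_log_one_add {u : ℝ} (hu : 0 ≤ u) :
    min 1 u ≤ 2 * Real.log (1 + u) := by
  have hpos : 0 < 1 + u := by linarith
  have hlog : u / (1 + u) ≤ Real.log (1 + u) := by
    have h := Real.one_sub_inv_le_log_of_pos hpos
    have : 1 - (1 + u)⁻¹ = u / (1 + u) := by field_simp; ring
    rwa [this] at h
  have hmin : min 1 u * (1 + u) ≤ 2 * u := by
    rcases le_total u 1 with h | h
    · rw [min_eq_right h]; nlinarith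
    · rw [min_eq_left h]; linarith
  have : min 1 u ≤ 2 * (u / (1 + u)) := by
    rw [mul_div_assoc', le_div_iff₀ hpos]; exact hmin
  linarith

lemma Finset.prod_le_sum_div_card_pow {ι : Type*} (s : Finset ι) (z : ι → ℝ)
    (hz : ∀ i ∈ s, 0 ≤ z i) : ∏ i ∈ s, z i ≤ ((∑ i ∈ s, z i) / #s) ^ #s := by
  rcases s.eq_empty_or_nonempty with rfl | hs
  · simp
  have hcard : #s ≠ 0 := hs.card_ne_zero
  have hprod : 0 ≤ ∏ i ∈ s, z i := prod_nonneg hz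
  have amgm := Real.geom_mean_le_arith_mean s (fun _ ↦ 1) z (fun _ _ ↦ zero_le_one)
    (by simpa using hs) hz
  simp only [Real.rpow_one, sum_const, nsmul_eq_mul, mul_one, one_mul] at amgm
  calc ∏ i ∈ s, z i = ((∏ i ∈ s, z i) ^ ((#s : ℝ)⁻¹)) ^ #s :=
        (Real.rpow_inv_natCast_pow hprod hcard).symm
    _ ≤ ((∑ i ∈ s, z i) / #s) ^ #s := by gcongr

namespace Matrix

variable {n : Type*} [Fintype n] [DecidableEq n]

theorem det_add_vecMulVec {R : Type*} [CommRing R] {A : Matrix n n R} (hA : IsUnit A.det)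
    (u v : n → R) : (A + vecMulVec u v).det = A.det * (1 + v ⬝ᵥ A⁻¹ *ᵥ u) := by
  rw [vecMulVec_eq Unit, det_add_replicateCol_mul_replicateRow hA, Matrix.mul_assoc,
    ← replicateCol_mulVec, det_one_add_mul_comm, det_one_add_replicateCol_mul_replicateRow]

theorem PosSemidef.det_le_trace_div_card_pow {A : Matrix n n ℝ} (hA : A.PosSemidef) :
    A.det ≤ (A.trace / Fintype.card n) ^ Fintype.card n := by
  have hdet : A.det = ∏ i, hA.isHermitian.eigenvalues i := by
    simpa using hA.isHermitian.det_eq_prod_eigenvalues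
  have htrace : A.trace = ∑ i, hA.isHermitian.eigenvalues i := by
    simpa using hA.isHermitian.trace_eq_sum_eigenvalues
  rw [hdet, htrace]
  exact prod_le_sum_div_card_pow _ _ fun i _ ↦ hA.eigenvalues_nonneg i

end Matrix

section RankOneUpdates

variable {n : Type*} [Fintype n] {A : ℕ → Matrix n n ℝ} {x : ℕ → n → ℝ}

theorem posDef_of_vecMulVec_updates (h0 : (A 0).PosDef)
    (hrec : ∀ t, A (t + 1) = A t + vecMulVec (x (t + 1)) (x (t + 1))) (t : ℕ) :
    (A t).PosDef := by
  induction t with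
  | zero => exact h0
  | succ t ih =>
    rw [hrec t]
    simpa using ih.add_posSemidef (posSemidef_vecMulVec_self_star (x (t + 1)))

theorem sum_min_one_le_two_mul_log_det_div [DecidableEq n] (h0 : (A 0).PosDef)
    (hrec : ∀ t, A (t + 1) = A t + vecMulVec (x (t + 1)) (x (t + 1))) (N : ℕ) :
    ∑ t ∈ Icc 1 N, min 1 (x t ⬝ᵥ (A (t - 1))⁻¹ *ᵥ x t) ≤
      2 * Real.log ((A N).det / (A 0).det) := by
  have hPD := posDef_of_vecMulVec_updates h0 hrec
  induction N with
  | zero => simp [div_self (hPD 0).det_pos.ne']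
  | succ N ih =>
    set q := x (N + 1) ⬝ᵥ (A N)⁻¹ *ᵥ x (N + 1)
    have hq : 0 ≤ q := (hPD N).inv.posSemidef.dotProduct_mulVec_nonneg _
    have hdet : (A (N + 1)).det / (A 0).det = (A N).det / (A 0).det * (1 + q) := by
      rw [hrec N, det_add_vecMulVec (hPD N).det_pos.ne'.isUnit]
      ring
    rw [sum_Icc_succ_top (by omega), Nat.add_sub_cancel, hdet,
      Real.log_mul (div_pos (hPD N).det_pos (hPD 0).det_pos).ne' (by positivity)]
    linarith [min_one_le_two_mul_log_one_add hq]

theorem trace_le_of_vecMulVec_updates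
    (hrec : ∀ t, A (t + 1) = A t + vecMulVec (x (t + 1)) (x (t + 1)))
    {c : ℝ} (hx : ∀ t, x t ⬝ᵥ x t ≤ c) (N : ℕ) :
    (A N).trace ≤ (A 0).trace + N * c := by
  induction N with
  | zero => simp
  | succ N ih =>
    rw [hrec N, trace_add, trace_vecMulVec]
    push_cast
    linarith [hx (N + 1)]

end RankOneUpdates

theorem stmt13_general {d : ℕ} (η S : ℝ) (hη : 0 < η) (T : ℕ)
    (x : ℕ → Fin d → ℝ) (A : ℕ → Matrix (Fin d) (Fin d) ℝ)
    (hA0 : A 0 = η • 1)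
    (hrec : ∀ t, A (t + 1) = A t + Matrix.vecMulVec (x (t + 1)) (x (t + 1)))
    (hx : ∀ t, Real.sqrt (x t ⬝ᵥ x t) ≤ S) :
    (∑ t ∈ Finset.Icc 1 T, min 1 (x t ⬝ᵥ (A (t - 1))⁻¹.mulVec (x t)))
      ≤ 2 * Real.log ((A T).det / (A 0).det) ∧
    2 * Real.log ((A T).det / (A 0).det) ≤
      2 * d * Real.log (1 + T * S ^ 2 / (η * d)) := by
  have h0 : (A 0).PosDef := hA0 ▸ PosDef.one.smul hη
  refine ⟨sum_min_one_le_two_mul_log_det_div h0 hrec T, ?_⟩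
  obtain rfl | hd := d.eq_zero_or_pos
  · simp
  have hPD := posDef_of_vecMulVec_updates h0 hrec T
  have htrace := trace_le_of_vecMulVec_updates hrec (fun t ↦ (Real.sqrt_le_iff.mp (hx t)).2) T
  rw [hA0, trace_smul, trace_one, Fintype.card_fin, smul_eq_mul] at htrace
  have hratio : (A T).det / (A 0).det ≤ (1 + T * S ^ 2 / (η * d)) ^ d := calc
    (A T).det / (A 0).det ≤ ((A T).trace / d) ^ d / η ^ d := by
      rw [hA0, det_smul, det_one, mul_one, Fintype.card_fin]
      gcongr
      simpa using hPD.posSemidef.det_le_trace_div_card_pow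
    _ ≤ ((η * d + T * S ^ 2) / d) ^ d / η ^ d := by have := hPD.posSemidef.trace_nonneg; gcongr
    _ = (1 + T * S ^ 2 / (η * d)) ^ d := by
      rw [← div_pow]
      congr 1
      field_simp
  have hlog := Real.log_le_log (div_pos hPD.det_pos h0.det_pos) hratio
  rw [Real.log_pow] at hlog
  linarith

theorem stmt13 {d : ℕ} (hd : 0 < d) (η S : ℝ) (hη : 0 < η) (T : ℕ)
    (x : ℕ → Fin d → ℝ) (A : ℕ → Matrix (Fin d) (Fin d) ℝ)
    (hA0 : A 0 = η • 1)
    (hrec : ∀ t, A (t + 1) = A t + Matrix.vecMulVec (x (t + 1)) (x (t + 1)))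
    (hx : ∀ t, Real.sqrt (x t ⬝ᵥ x t) ≤ S) :
    (∑ t ∈ Finset.Icc 1 T, min 1 (x t ⬝ᵥ (A (t - 1))⁻¹.mulVec (x t)))
      ≤ 2 * Real.log ((A T).det / (A 0).det) ∧
    2 * Real.log ((A T).det / (A 0).det) ≤
      2 * d * Real.log (1 + T * S ^ 2 / (η * d)) :=
  stmt13_general η S hη T x A hA0 hrec hx
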